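/- arXiv:2503.12316 — 2 statements merged into one kernel-verified Lean document; each statement's English description precedes it below -/
import Mathlib

section
/- Let y = bᵀc be computed by the adaptive-precision method: indices 1..M are partitioned into p groups G_1,…,G_p, the partial sum over G_k is computed in precision u_k with error |ŷ_k − y_k| ≤ m_k·u_k·(1+u_k)²·Σ_{i∈G_k}|b_i c_i| where m_k = |G_k|, and the p partials are summed with error |ŷ − Σ_k ŷ_k| ≤ ε·Σ_k|ŷ_k| where ε = (p−1)u_1. Then the normalized error γ = |ŷ − y| / (|b|ᵀ|c|) satisfies γ ≤ ε + (1+ε)·Σ_{k=1}^p m_k·u_k·(1+u_k)²·β_k, where β_k = (Σ_{i∈G_k}|b_i c_i|) / (|b|ᵀ|c|). -/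
open Finset

/-- Theorem 1: adaptive-precision inner product rounding error. -/
theorem adaptive_precision_error_bound
    (M p : ℕ) (hp : 2 ≤ p)
    (b c : Fin M → ℝ)
    (hS : 0 < ∑ i, |b i * c i|)
    (u : Fin p → ℝ) (hupos : ∀ k, 0 < u k)
    (humono : ∀ k l : Fin p, k < l → u k < u l)
    (G : Fin p → Finset (Fin M))
    (hdisj : ∀ k l : Fin p, k ≠ l → Disjoint (G k) (G l))
    (hcover : ∀ i : Fin M, ∃ k, i ∈ G k)
    (yhatk : Fin p → ℝ)
    (hyk : ∀ k : Fin p,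
      |yhatk k - ∑ i ∈ G k, b i * c i|
        ≤ ((G k).card : ℝ) * u k * (1 + u k) ^ 2 * ∑ i ∈ G k, |b i * c i|)
    (yhat ε : ℝ) (hε : ε = ((p : ℝ) - 1) * u ⟨0, by omega⟩)
    (hfin : |yhat - ∑ k, yhatk k| ≤ ε * ∑ k, |yhatk k|) :
    |yhat - ∑ i, b i * c i| / (∑ i, |b i * c i|)
      ≤ ε + (1 + ε) *
        ∑ k, ((G k).card : ℝ) * u k * (1 + u k) ^ 2 *
          ((∑ i ∈ G k, |b i * c i|) / (∑ i, |b i * c i|)) := by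
  set S : ℝ := ∑ i, |b i * c i| with hSdef
  set t : Fin p → ℝ := fun k =>
    ((G k).card : ℝ) * u k * (1 + u k) ^ 2 * ∑ i ∈ G k, |b i * c i| with ht
  have hpart : ∀ f : Fin M → ℝ, ∑ k, ∑ i ∈ G k, f i = ∑ i, f i := by
    intro f
    rw [← Finset.sum_biUnion (fun k _ l _ h => hdisj k l h)]
    congr 1
    ext i
    simpa [Finset.mem_biUnion] using hcover i
  have hε0 : 0 ≤ ε := by
    rw [hε]
    have : (1 : ℝ) ≤ (p : ℝ) - 1 := by
      have : (2 : ℝ) ≤ (p : ℝ) := by exact_mod_cast hp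
      linarith
    nlinarith [(hupos ⟨0, by omega⟩)]
  have ht0 : ∀ k, 0 ≤ t k := by
    intro k
    exact mul_nonneg (mul_nonneg (mul_nonneg (Nat.cast_nonneg _) (hupos k).le)
      (sq_nonneg _)) (Finset.sum_nonneg fun i _ => abs_nonneg _)
  have hSk : ∀ k, |∑ i ∈ G k, b i * c i| ≤ ∑ i ∈ G k, |b i * c i| :=
    fun k => Finset.abs_sum_le_sum_abs _ _
  set T : ℝ := ∑ k, t k with hT
  have hT0 : 0 ≤ T := Finset.sum_nonneg fun k _ => ht0 k
  -- bound on sum of |yhatk|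
  have hsumabs : ∑ k, |yhatk k| ≤ S + T := by
    have h1 : ∀ k : Fin p, |yhatk k| ≤ (∑ i ∈ G k, |b i * c i|) + t k := by
      intro k
      calc |yhatk k| = |(∑ i ∈ G k, b i * c i) + (yhatk k - ∑ i ∈ G k, b i * c i)| := by
            ring_nf
        _ ≤ |∑ i ∈ G k, b i * c i| + |yhatk k - ∑ i ∈ G k, b i * c i| := abs_add_le _ _
        _ ≤ (∑ i ∈ G k, |b i * c i|) + t k := add_le_add (hSk k) (hyk k)
    calc ∑ k, |yhatk k| ≤ ∑ k, ((∑ i ∈ G k, |b i * c i|) + t k) :=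
          Finset.sum_le_sum fun k _ => h1 k
      _ = S + T := by rw [Finset.sum_add_distrib, hpart]
  have hmid : |(∑ k, yhatk k) - ∑ i, b i * c i| ≤ T := by
    rw [← hpart (fun i => b i * c i), ← Finset.sum_sub_distrib]
    exact le_trans (Finset.abs_sum_le_sum_abs _ _)
      (Finset.sum_le_sum fun k _ => hyk k)
  have key : |yhat - ∑ i, b i * c i| ≤ ε * S + (1 + ε) * T := by
    calc |yhat - ∑ i, b i * c i|
        = |(yhat - ∑ k, yhatk k) + ((∑ k, yhatk k) - ∑ i, b i * c i)| := by ring_nf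
      _ ≤ |yhat - ∑ k, yhatk k| + |(∑ k, yhatk k) - ∑ i, b i * c i| := abs_add_le _ _
      _ ≤ ε * ∑ k, |yhatk k| + T := add_le_add hfin hmid
      _ ≤ ε * (S + T) + T := by nlinarith
      _ = ε * S + (1 + ε) * T := by ring
  have hrhs : ∑ k, ((G k).card : ℝ) * u k * (1 + u k) ^ 2 *
      ((∑ i ∈ G k, |b i * c i|) / S) = T / S := by
    rw [hT, Finset.sum_div]
    refine Finset.sum_congr rfl fun k _ => ?_
    rw [ht, mul_div_assoc]
  rw [hrhs]
  rw [div_le_iff₀ hS]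
  have : (ε + (1 + ε) * (T / S)) * S = ε * S + (1 + ε) * T := by
    field_simp
  rw [this]
  exact key
end

section
/- For the mixed-precision method (Algorithm 2) with blocks of size exactly B (so M = pB), if each partial block sum is computed with error |ŷ_k − y_k| ≤ (B+1)·u_l·(1+u_l)²·Σ_{i∈block k}|b_i c_i| and the final summation in precision u_h contributes error ≤ (p−1)u_h·Σ_k|ŷ_k|, then the normalized error satisfies γ_MP ≤ (p−1)u_h + (1+(p−1)u_h)·(B+1)·u_l·(1+u_l)², showing the mixed-precision error is dominated by B·u_l rather than M·u_l. -/
open Finset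

lemma block_sum_aux (p B : ℕ) (hB : 1 ≤ B) (M : ℕ) (hM : M = p * B) (g : Fin M → ℝ) :
    ∑ k : Fin p, ∑ i ∈ univ.filter
        (fun i : Fin M => k.val * B ≤ i.val ∧ i.val < (k.val + 1) * B), g i
      = ∑ i, g i := by
  have hB0 : 0 < B := hB
  have hf : ∀ i : Fin M, i.val / B < p := fun i => by
    have hi : i.val < p * B := by have := i.isLt; omega
    exact (Nat.div_lt_iff_lt_mul hB0).mpr (by omega)
  rw [← Finset.sum_fiberwise_of_maps_to
      (g := fun i : Fin M => (⟨i.val / B, hf i⟩ : Fin p))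
      (t := (univ : Finset (Fin p))) (fun _ _ => mem_univ _) g]
  refine Finset.sum_congr rfl fun k _ => Finset.sum_congr ?_ fun _ _ => rfl
  ext i
  simp only [mem_filter, mem_univ, true_and, Fin.ext_iff]
  constructor
  · rintro ⟨h1, h2⟩
    exact Nat.div_eq_of_lt_le h1 h2
  · intro h
    rw [← h]
    exact ⟨Nat.div_mul_le_self i.val B,
      (Nat.div_lt_iff_lt_mul hB0).mp (Nat.lt_succ_self _)⟩

/-- mixed-precision error bound with uniform block size B, M = pB. -/
theorem mixed_precision_normalized_error
    (p B : ℕ) (hp : 1 ≤ p) (hB : 1 ≤ B) (M : ℕ) (hM : M = p * B)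
    (b c : Fin M → ℝ) (ul uh : ℝ) (huh : 0 < uh) (hul : uh < ul)
    (hS : 0 < ∑ i, |b i * c i|)
    (yhatk : Fin p → ℝ)
    (hyk : ∀ k : Fin p,
      |yhatk k - ∑ i ∈ univ.filter (fun i : Fin M => k.val * B ≤ i.val ∧ i.val < (k.val + 1) * B),
          b i * c i|
        ≤ ((B : ℝ) + 1) * ul * (1 + ul) ^ 2 *
          ∑ i ∈ univ.filter (fun i : Fin M => k.val * B ≤ i.val ∧ i.val < (k.val + 1) * B),
            |b i * c i|)
    (yhat : ℝ)
    (hfin : |yhat - ∑ k, yhatk k| ≤ ((p : ℝ) - 1) * uh * ∑ k, |yhatk k|)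
    (γMP : ℝ)
    (hγMP : γMP = |yhat - ∑ i, b i * c i| / (∑ i, |b i * c i|)) :
    γMP ≤ ((p : ℝ) - 1) * uh +
      (1 + ((p : ℝ) - 1) * uh) * ((B : ℝ) + 1) * ul * (1 + ul) ^ 2 := by
  set E : ℝ := ((B : ℝ) + 1) * ul * (1 + ul) ^ 2 with hE
  set α : ℝ := ((p : ℝ) - 1) * uh with hα
  set S : ℝ := ∑ i, |b i * c i| with hSdef
  set yk : Fin p → ℝ := fun k =>
    ∑ i ∈ univ.filter (fun i : Fin M => k.val * B ≤ i.val ∧ i.val < (k.val + 1) * B),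
      b i * c i with hykdef
  set Sk : Fin p → ℝ := fun k =>
    ∑ i ∈ univ.filter (fun i : Fin M => k.val * B ≤ i.val ∧ i.val < (k.val + 1) * B),
      |b i * c i| with hSkdef
  have hsum_y : ∑ k, yk k = ∑ i, b i * c i := block_sum_aux p B hB M hM _
  have hsum_S : ∑ k, Sk k = S := block_sum_aux p B hB M hM _
  have hul0 : 0 < ul := huh.trans hul
  have hE0 : 0 ≤ E := by positivity
  have hα0 : 0 ≤ α := by
    have : (1 : ℝ) ≤ (p : ℝ) := by exact_mod_cast hp
    have := huh.le
    nlinarith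
  have hSk0 : ∀ k, 0 ≤ Sk k := fun k => Finset.sum_nonneg (fun i _ => abs_nonneg _)
  have hykSk : ∀ k, |yk k| ≤ Sk k := fun k => Finset.abs_sum_le_sum_abs _ _
  have hyhatk : ∀ k, |yhatk k| ≤ (1 + E) * Sk k := fun k => by
    calc |yhatk k| ≤ |yhatk k - yk k| + |yk k| := by
          have := abs_add_le (yhatk k - yk k) (yk k); simpa using this
      _ ≤ E * Sk k + Sk k := add_le_add (hyk k) (hykSk k)
      _ = (1 + E) * Sk k := by ring
  have hsum_yhat : ∑ k, |yhatk k| ≤ (1 + E) * S := by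
    calc ∑ k, |yhatk k| ≤ ∑ k, (1 + E) * Sk k := Finset.sum_le_sum (fun k _ => hyhatk k)
      _ = (1 + E) * S := by rw [← Finset.mul_sum, hsum_S]
  have hdiff : |∑ k, yhatk k - ∑ i, b i * c i| ≤ E * S := by
    rw [← hsum_y, ← Finset.sum_sub_distrib]
    calc |∑ k, (yhatk k - yk k)| ≤ ∑ k, |yhatk k - yk k| := Finset.abs_sum_le_sum_abs _ _
      _ ≤ ∑ k, E * Sk k := Finset.sum_le_sum (fun k _ => hyk k)
      _ = E * S := by rw [← Finset.mul_sum, hsum_S]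
  have hmain : |yhat - ∑ i, b i * c i| ≤ (α + (1 + α) * E) * S := by
    calc |yhat - ∑ i, b i * c i|
        ≤ |yhat - ∑ k, yhatk k| + |∑ k, yhatk k - ∑ i, b i * c i| := by
          have := abs_sub_le yhat (∑ k, yhatk k) (∑ i, b i * c i); simpa using this
      _ ≤ α * ((1 + E) * S) + E * S := add_le_add
          (hfin.trans (mul_le_mul_of_nonneg_left hsum_yhat hα0)) hdiff
      _ = (α + (1 + α) * E) * S := by ring
  rw [hγMP]
  rw [div_le_iff₀ hS]
  calc |yhat - ∑ i, b i * c i| ≤ (α + (1 + α) * E) * S := hmain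
    _ = (α + (1 + α) * ((B:ℝ)+1) * ul * (1+ul)^2) * ∑ i, |b i * c i| := by rw [hE]; ring
end
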